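/- arXiv:2605.07309 — 4 statements merged into one kernel-verified Lean document; each statement's English description precedes it below -/
import Mathlib

section
/- Let A be a nonempty finite set, let w, v : A → ℝ be probability weight vectors (nonnegative, summing to 1) with v_a > 0 for all a, let n be a natural number, let μp and νp be probability measures on a measurable space Y, and for each a ∈ A and i ∈ Fin n let μ_{a,i} and ν_i be probability measures on a measurable space X_i. Define the probability measures P = Σ_{a∈A} w_a • (δ_a ⊗ (μp ⊗ ⊗_{i} μ_{a,i})) and Q = Σ_{a∈A} v_a • (δ_a ⊗ (νp ⊗ ⊗_{i} ν_i)) on A × (Y × Π_{i} X_i), where A carries the discrete σ-algebra, δ_a is the Dirac measure at a, and ⊗_{i} denotes the finite product measure. Then klDiv(P, Q) = klDiv(μp, νp) + Σ_{a∈A} w_a log(w_a / v_a) + Σ_{a∈A} w_a Σ_{i} klDiv(μ_{a,i}, ν_i), with the conventions 0·log(0/v)=0 and that both sides equal +∞ when any relevant absolute continuity fails. -/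
/-!
Put `W = ∑ₐ wₐ δₐ` and `V = ∑ₐ vₐ δₐ`. The two measures are the composition products `W ⊗ₘ κ`
and `V ⊗ₘ η`, where `κ a = μp ⊗ ∏ᵢ μ a i` and `η` is the constant kernel `νp ⊗ ∏ᵢ ν i`.
The chain rule splits off `KL(W, V) = ∑ₐ wₐ log (wₐ / vₐ)`. Since `W` is discrete, what remains
is the average `∑ₐ wₐ KL(κ a, η a)`, and each of these divergences splits over the product
factors by the chain rule for constant kernels. On probability measures, `klDiv` agrees with
Mathlib's `InformationTheory.klDiv`, whose correction term `ν univ - μ univ` then vanishes.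
-/

open MeasureTheory
open scoped ENNReal Classical

/-- Kullback–Leibler divergence of `μ` from `ν`: `∫ log (dμ/dν) dμ` if `μ ≪ ν` (and the
log-likelihood ratio is integrable), `+∞` otherwise. -/
noncomputable def klDiv {X : Type*} [MeasurableSpace X] (μ ν : Measure X) : ℝ≥0∞ :=
  if μ ≪ ν ∧ Integrable (llr μ ν) μ then ENNReal.ofReal (∫ x, llr μ ν x ∂μ) else ⊤

open ProbabilityTheory

namespace MeasureTheory.Measure

variable {α β : Type*} [MeasurableSpace α] [MeasurableSpace β]

lemma compProd_eq_withDensity_rnDeriv [MeasurableSpace.CountableOrCountablyGenerated α β]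
    (μ : Measure α) [SFinite μ] (κ η : Kernel α β) [IsFiniteKernel κ] [IsFiniteKernel η]
    (h : ∀ᵐ a ∂μ, κ a ≪ η a) :
    μ ⊗ₘ κ = (μ ⊗ₘ η).withDensity (fun p ↦ κ.rnDeriv η p.1 p.2) := by
  rw [← compProd_withDensity (Kernel.measurable_rnDeriv κ η)]
  refine compProd_congr ?_
  filter_upwards [h] with a ha using (Kernel.withDensity_rnDeriv_eq ha).symm

variable [Fintype α]

@[simp]
lemma sum_smul_dirac_apply_singleton [MeasurableSingletonClass α] (c : α → ℝ≥0∞) (a : α) :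
    (∑ b, c b • dirac b) {a} = c a := by
  simp [Set.indicator_apply]

lemma isFiniteMeasure_sum_smul_dirac {c : α → ℝ≥0∞} (hc : ∀ a, c a ≠ ∞) :
    IsFiniteMeasure (∑ a, c a • dirac a) := by
  constructor
  simpa [ENNReal.sum_lt_top, lt_top_iff_ne_top] using hc

lemma isProbabilityMeasure_sum_smul_dirac {w : α → ℝ} (hw : ∀ a, 0 ≤ w a) (h1 : ∑ a, w a = 1) :
    IsProbabilityMeasure (∑ a, ENNReal.ofReal (w a) • dirac a) := by
  constructor
  simp [← ENNReal.ofReal_sum_of_nonneg fun a _ ↦ hw a, h1]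

lemma sum_smul_dirac_prod_eq_compProd [MeasurableSingletonClass α] (c : α → ℝ≥0∞)
    (κ : Kernel α β) [IsSFiniteKernel κ] :
    ∑ a, c a • (dirac a).prod (κ a) = (∑ a, c a • dirac a) ⊗ₘ κ := by
  ext s hs
  rw [compProd_apply hs, lintegral_fintype, finsetSum_apply]
  simp [dirac_prod, map_apply measurable_prodMk_left hs, mul_comm]

end MeasureTheory.Measure

namespace InformationTheory

variable {α β : Type*} {mα : MeasurableSpace α} {mβ : MeasurableSpace β}

lemma klDiv_map_measurableEquiv (μ ν : Measure α) [IsFiniteMeasure μ] [IsFiniteMeasure ν]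
    (e : α ≃ᵐ β) : klDiv (μ.map e) (ν.map e) = klDiv μ ν := by
  refine le_antisymm (klDiv_map_le μ ν e.measurable) ?_
  calc klDiv μ ν = klDiv ((μ.map e).map e.symm) ((ν.map e).map e.symm) := by
        rw [MeasurableEquiv.map_symm_map, MeasurableEquiv.map_symm_map]
  _ ≤ klDiv (μ.map e) (ν.map e) := klDiv_map_le _ _ e.symm.measurable

lemma klDiv_prod (μ₁ ν₁ : Measure α) (μ₂ ν₂ : Measure β) [IsProbabilityMeasure μ₁]
    [IsFiniteMeasure ν₁] [IsProbabilityMeasure μ₂] [IsProbabilityMeasure ν₂] :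
    klDiv (μ₁.prod μ₂) (ν₁.prod ν₂) = klDiv μ₁ ν₁ + klDiv μ₂ ν₂ := by
  have h := klDiv_compProd_eq_add μ₁ ν₁ (Kernel.const α μ₂) (Kernel.const α ν₂)
  have h' := klDiv_compProd_left μ₂ ν₂ (Kernel.const β μ₁)
  simp only [Measure.compProd_const] at h h'
  rw [h, ← h', ← klDiv_map_measurableEquiv (μ₁.prod μ₂) _ MeasurableEquiv.prodComm]
  exact congrArg _ <| congrArg₂ _ Measure.prod_swap Measure.prod_swap

lemma klDiv_pi {n : ℕ} {X : Fin n → Type*} [∀ i, MeasurableSpace (X i)]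
    (μ ν : ∀ i, Measure (X i)) [∀ i, IsProbabilityMeasure (μ i)]
    [∀ i, IsProbabilityMeasure (ν i)] :
    klDiv (Measure.pi μ) (Measure.pi ν) = ∑ i, klDiv (μ i) (ν i) := by
  induction n with
  | zero =>
    rw [Measure.pi_of_empty μ, Measure.pi_of_empty ν, klDiv_self, Finset.univ_eq_empty,
      Finset.sum_empty]
  | succ n ih =>
    rw [← klDiv_map_measurableEquiv _ _ (MeasurableEquiv.piFinSuccAbove X 0),
      (measurePreserving_piFinSuccAbove μ 0).map_eq,
      (measurePreserving_piFinSuccAbove ν 0).map_eq, klDiv_prod, ih, Fin.sum_univ_succ]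
    rfl

lemma klDiv_compProd_right_eq_tsum [Countable α] [MeasurableSingletonClass α]
    (μ : Measure α) [IsFiniteMeasure μ] (κ η : Kernel α β) [IsFiniteKernel κ] [IsFiniteKernel η] :
    klDiv (μ ⊗ₘ κ) (μ ⊗ₘ η) = ∑' a, μ {a} * klDiv (κ a) (η a) := by
  by_cases hac : ∀ᵐ a ∂μ, κ a ≪ η a
  · have hrn : (μ ⊗ₘ κ).rnDeriv (μ ⊗ₘ η) =ᵐ[μ ⊗ₘ η] fun p ↦ κ.rnDeriv η p.1 p.2 := by
      rw [Measure.compProd_eq_withDensity_rnDeriv μ κ η hac]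
      exact Measure.rnDeriv_withDensity _ (Kernel.measurable_rnDeriv κ η)
    rw [klDiv_eq_lintegral_klFun_of_ac (Measure.AbsolutelyContinuous.compProd_right hac),
      lintegral_congr_ae (hrn.mono fun p hp ↦ by rw [hp]),
      Measure.lintegral_compProd (by fun_prop), lintegral_countable']
    refine tsum_congr fun a ↦ ?_
    rcases eq_or_ne (μ {a}) 0 with ha | ha
    · simp [ha]
    · rw [mul_comm, klDiv_eq_lintegral_klFun_of_ac (ae_iff_of_countable.1 hac a ha)]
      congr 1
      exact lintegral_congr_ae ((Kernel.rnDeriv_eq_rnDeriv_measure (κ := κ)).mono fun z hz ↦ by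
        simp only [hz])
  · rw [klDiv_of_not_ac (mt Measure.absolutelyContinuous_compProd_right_iff.1 hac)]
    obtain ⟨a, ha, hna⟩ : ∃ a, μ {a} ≠ 0 ∧ ¬ κ a ≪ η a := by simpa [ae_iff_of_countable] using hac
    exact (ENNReal.tsum_eq_top_of_eq_top ⟨a, by rw [klDiv_of_not_ac hna, ENNReal.mul_top ha]⟩).symm

lemma klDiv_sum_smul_dirac [Fintype α] [MeasurableSingletonClass α] (w v : α → ℝ)
    (hw : ∀ a, 0 ≤ w a) (hv : ∀ a, 0 < v a) :
    klDiv (∑ a, ENNReal.ofReal (w a) • Measure.dirac a)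
        (∑ a, ENNReal.ofReal (v a) • Measure.dirac a)
      = ENNReal.ofReal (∑ a, w a * Real.log (w a / v a) + ∑ a, v a - ∑ a, w a) := by
  set W := ∑ a, ENNReal.ofReal (w a) • Measure.dirac a
  set V := ∑ a, ENNReal.ofReal (v a) • Measure.dirac a
  set f : α → ℝ≥0∞ := fun a ↦ ENNReal.ofReal (w a / v a)
  have hW : W = V.withDensity f := by
    refine Measure.ext_iff_singleton.2 fun a ↦ ?_
    rw [withDensity_apply _ (measurableSet_singleton a), lintegral_singleton,
      Measure.sum_smul_dirac_apply_singleton, Measure.sum_smul_dirac_apply_singleton,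
      ← ENNReal.ofReal_mul (div_nonneg (hw a) (hv a).le), div_mul_cancel₀ _ (hv a).ne']
  have : IsFiniteMeasure W :=
    Measure.isFiniteMeasure_sum_smul_dirac fun _ ↦ ENNReal.ofReal_ne_top
  have : IsFiniteMeasure V :=
    Measure.isFiniteMeasure_sum_smul_dirac fun _ ↦ ENNReal.ofReal_ne_top
  have hrn : W.rnDeriv V =ᵐ[V] f := hW ▸ Measure.rnDeriv_withDensity V (by fun_prop)
  rw [klDiv_eq_lintegral_klFun_of_ac (hW ▸ withDensity_absolutelyContinuous _ _),
    lintegral_congr_ae (hrn.mono fun a ha ↦ by rw [ha]), lintegral_fintype]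
  simp only [f, V, Measure.sum_smul_dirac_apply_singleton,
    ENNReal.toReal_ofReal (div_nonneg (hw _) (hv _).le),
    ← ENNReal.ofReal_mul (klFun_nonneg (div_nonneg (hw _) (hv _).le))]
  rw [← ENNReal.ofReal_sum_of_nonneg fun a _ ↦
    mul_nonneg (klFun_nonneg (div_nonneg (hw a) (hv a).le)) (hv a).le,
    ← Finset.sum_add_distrib, ← Finset.sum_sub_distrib]
  refine congrArg _ (Finset.sum_congr rfl fun a _ ↦ ?_)
  have := (hv a).ne'
  rw [klFun_apply]
  field_simp

end InformationTheory

lemma klDiv_eq_informationTheory_klDiv {α : Type*} [MeasurableSpace α] (μ ν : Measure α)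
    [IsProbabilityMeasure μ] [IsProbabilityMeasure ν] :
    klDiv μ ν = InformationTheory.klDiv μ ν := by
  simp [klDiv, InformationTheory.klDiv_def]

theorem klDiv_mixture_of_products_general {A Y : Type*} [Fintype A]
    [MeasurableSpace A] [DiscreteMeasurableSpace A] [MeasurableSpace Y]
    {n : ℕ} {X : Fin n → Type*} [∀ i, MeasurableSpace (X i)]
    (w v : A → ℝ) (hw0 : ∀ a, 0 ≤ w a) (hw1 : ∑ a, w a = 1)
    (hv0 : ∀ a, 0 < v a) (hv1 : ∑ a, v a = 1)
    (μp νp : Measure Y) [IsProbabilityMeasure μp] [IsProbabilityMeasure νp]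
    (μ : A → ∀ i, Measure (X i)) (ν : ∀ i, Measure (X i))
    [∀ a i, IsProbabilityMeasure (μ a i)] [∀ i, IsProbabilityMeasure (ν i)] :
    klDiv
      (∑ a, ENNReal.ofReal (w a) •
        ((Measure.dirac a).prod (μp.prod (Measure.pi (μ a)))))
      (∑ a, ENNReal.ofReal (v a) •
        ((Measure.dirac a).prod (νp.prod (Measure.pi ν))))
    = klDiv μp νp + ENNReal.ofReal (∑ a, w a * Real.log (w a / v a))
      + ∑ a, ENNReal.ofReal (w a) * ∑ i, klDiv (μ a i) (ν i) := by
  let κ : Kernel A (Y × ∀ i, X i) := Kernel.ofFunOfCountable fun a ↦ μp.prod (Measure.pi (μ a))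
  have hκ : ∀ a, κ a = μp.prod (Measure.pi (μ a)) := fun _ ↦ rfl
  have : IsMarkovKernel κ := ⟨fun a ↦ hκ a ▸ inferInstance⟩
  have := Measure.isProbabilityMeasure_sum_smul_dirac hw0 hw1
  have := Measure.isProbabilityMeasure_sum_smul_dirac (fun a ↦ (hv0 a).le) hv1
  have hP : ∑ a, ENNReal.ofReal (w a) • (Measure.dirac a).prod (μp.prod (Measure.pi (μ a)))
      = (∑ a, ENNReal.ofReal (w a) • Measure.dirac a) ⊗ₘ κ :=
    Measure.sum_smul_dirac_prod_eq_compProd _ κ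
  have hQ : ∑ a, ENNReal.ofReal (v a) • (Measure.dirac a).prod (νp.prod (Measure.pi ν))
      = (∑ a, ENNReal.ofReal (v a) • Measure.dirac a) ⊗ₘ Kernel.const A (νp.prod (Measure.pi ν)) :=
    Measure.sum_smul_dirac_prod_eq_compProd _ (Kernel.const A _)
  have hw : ∑ a, ENNReal.ofReal (w a) = 1 := by
    rw [← ENNReal.ofReal_sum_of_nonneg fun a _ ↦ hw0 a, hw1, ENNReal.ofReal_one]
  simp only [hP, hQ, klDiv_eq_informationTheory_klDiv]
  rw [InformationTheory.klDiv_compProd_eq_add, InformationTheory.klDiv_sum_smul_dirac w v hw0 hv0,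
    hw1, hv1, add_sub_cancel_right, InformationTheory.klDiv_compProd_right_eq_tsum, tsum_fintype]
  simp only [Measure.sum_smul_dirac_apply_singleton, Kernel.const_apply, hκ,
    InformationTheory.klDiv_prod, InformationTheory.klDiv_pi, mul_add, Finset.sum_add_distrib,
    ← Finset.sum_mul, hw, one_mul]
  ring

/-- KLD simplification (Lemma 1): the KL divergence between a mixture of labelled products
`P = Σ_a w_a • (δ_a ⊗ (μp ⊗ ⊗_i μ_{a,i}))` and a PMB-form measure
`Q = Σ_a v_a • (δ_a ⊗ (νp ⊗ ⊗_i ν_i))` decomposes as the KLD between the PPP parts, the KLD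
between the weight vectors, and the weighted sum of the KLDs between the Bernoulli parts. -/
theorem klDiv_mixture_of_products {A Y : Type*} [Fintype A] [Nonempty A]
    [MeasurableSpace A] [DiscreteMeasurableSpace A] [MeasurableSpace Y]
    {n : ℕ} {X : Fin n → Type*} [∀ i, MeasurableSpace (X i)]
    (w v : A → ℝ) (hw0 : ∀ a, 0 ≤ w a) (hw1 : ∑ a, w a = 1)
    (hv0 : ∀ a, 0 < v a) (hv1 : ∑ a, v a = 1)
    (μp νp : Measure Y) [IsProbabilityMeasure μp] [IsProbabilityMeasure νp]
    (μ : A → ∀ i, Measure (X i)) (ν : ∀ i, Measure (X i))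
    [∀ a i, IsProbabilityMeasure (μ a i)] [∀ i, IsProbabilityMeasure (ν i)] :
    klDiv
      (∑ a, ENNReal.ofReal (w a) •
        ((Measure.dirac a).prod (μp.prod (Measure.pi (μ a)))))
      (∑ a, ENNReal.ofReal (v a) •
        ((Measure.dirac a).prod (νp.prod (Measure.pi ν))))
    = klDiv μp νp + ENNReal.ofReal (∑ a, w a * Real.log (w a / v a))
      + ∑ a, ENNReal.ofReal (w a) * ∑ i, klDiv (μ a i) (ν i) :=
  klDiv_mixture_of_products_general w v hw0 hw1 hv0 hv1 μp νp μ ν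
end

section
/- Let A be a nonempty finite set, let w : A → ℝ be a probability weight vector, let μ_a (a ∈ A) be probability measures on a measurable space X, and let μ̄ = Σ_{a∈A} w_a • μ_a. Then for every probability measure ν on X with μ_a ≪ ν for all a with w_a > 0, the compensation identity holds: Σ_{a∈A} w_a · klDiv(μ_a, ν) = Σ_{a∈A} w_a · klDiv(μ_a, μ̄) + klDiv(μ̄, ν). -/
/-!
Write `μ̄` for the mixture. On the support of `μ_a` the chain rule
`log dμ_a/dν = log dμ_a/dμ̄ + log dμ̄/dν` holds; integrating it against `w_a μ_a` and summing over
`a` turns the last term into `∫ log dμ̄/dν dμ̄`. Since `w_a μ_a ≤ μ̄`, the density `dμ_a/dμ̄` is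
bounded by `1 / w_a`, so every `klDiv μ_a μ̄` is finite, and the left side is infinite exactly
when `klDiv μ̄ ν` is.
-/

open MeasureTheory
open scoped ENNReal Classical

section Mixture

variable {A X : Type*} [Fintype A] [MeasurableSpace X] {w : A → ℝ} {μ : A → Measure X}

lemma isProbabilityMeasure_sum_ofReal_smul (hw0 : ∀ a, 0 ≤ w a) (hw1 : ∑ a, w a = 1)
    [∀ a, IsProbabilityMeasure (μ a)] :
    IsProbabilityMeasure (∑ a, ENNReal.ofReal (w a) • μ a) := by
  constructor
  simp only [Measure.finsetSum_apply, Measure.smul_apply, measure_univ, smul_eq_mul, mul_one]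
  rw [← ENNReal.ofReal_sum_of_nonneg fun a _ => hw0 a, hw1, ENNReal.ofReal_one]

lemma smul_le_sum_ofReal_smul (a : A) :
    ENNReal.ofReal (w a) • μ a ≤ ∑ a', ENNReal.ofReal (w a') • μ a' :=
  Finset.single_le_sum (f := fun a' => ENNReal.ofReal (w a') • μ a')
    (fun _ _ => Measure.zero_le _) (Finset.mem_univ a)

lemma absolutelyContinuous_sum_ofReal_smul {a : A} (ha : 0 < w a) :
    μ a ≪ ∑ a', ENNReal.ofReal (w a') • μ a' :=
  (Measure.absolutelyContinuous_smul (by simpa using ha)).trans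
    (Measure.absolutelyContinuous_of_le (smul_le_sum_ofReal_smul a))

lemma sum_ofReal_smul_absolutelyContinuous {ν : Measure X} (hac : ∀ a, 0 < w a → μ a ≪ ν) :
    (∑ a, ENNReal.ofReal (w a) • μ a) ≪ ν := by
  intro s hs
  rw [Measure.finsetSum_apply]
  refine Finset.sum_eq_zero fun a _ => ?_
  rcases lt_or_ge 0 (w a) with ha | ha
  · rw [Measure.smul_apply, hac a ha hs, smul_zero]
  · rw [ENNReal.ofReal_eq_zero.2 ha, zero_smul, Measure.coe_zero, Pi.zero_apply]

lemma integrable_sum_ofReal_smul_iff {E : Type*} [NormedAddCommGroup E] {f : X → E} :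
    Integrable f (∑ a, ENNReal.ofReal (w a) • μ a) ↔ ∀ a, 0 < w a → Integrable f (μ a) := by
  refine integrable_finsetSum_measure.trans (forall_congr' fun a => ?_)
  rcases lt_or_ge 0 (w a) with ha | ha
  · simp [integrable_smul_measure (ENNReal.ofReal_pos.2 ha).ne' ENNReal.ofReal_ne_top, ha]
  · simp [ENNReal.ofReal_eq_zero.2 ha, ha.not_gt]

lemma integral_sum_ofReal_smul {E : Type*} [NormedAddCommGroup E] [NormedSpace ℝ E] {f : X → E}
    (hw0 : ∀ a, 0 ≤ w a) (hf : Integrable f (∑ a, ENNReal.ofReal (w a) • μ a)) :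
    ∫ x, f x ∂(∑ a, ENNReal.ofReal (w a) • μ a) = ∑ a, w a • ∫ x, f x ∂μ a := by
  rw [integral_finsetSum_measure (integrable_finsetSum_measure.1 hf)]
  simp only [integral_smul_measure, ENNReal.toReal_ofReal (hw0 _)]

end Mixture

section LogLikelihoodRatio

variable {X : Type*} [MeasurableSpace X] {μ ρ ν : Measure X}

lemma integral_llr_nonneg [IsProbabilityMeasure μ] [IsProbabilityMeasure ν] (hμν : μ ≪ ν)
    (hint : Integrable (llr μ ν) μ) : 0 ≤ ∫ x, llr μ ν x ∂μ := by
  simpa using InformationTheory.integral_llr_add_sub_measure_univ_nonneg hμν hint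

lemma llr_ae_eq_llr_add_llr [SigmaFinite μ] [SigmaFinite ρ] [SigmaFinite ν] (hμρ : μ ≪ ρ)
    (hρν : ρ ≪ ν) : llr μ ν =ᵐ[μ] llr μ ρ + llr ρ ν := by
  have hμν : μ ≪ ν := hμρ.trans hρν
  filter_upwards [hμν.ae_le (Measure.rnDeriv_mul_rnDeriv hμρ),
    Measure.rnDeriv_pos hμρ, hμρ.ae_le (Measure.rnDeriv_lt_top μ ρ),
    hμρ.ae_le (Measure.rnDeriv_pos hρν), hμν.ae_le (Measure.rnDeriv_lt_top ρ ν)]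
    with x hmul hμρ_pos hμρ_lt hρν_pos hρν_lt
  rw [Pi.add_apply, llr, llr, llr, ← hmul, Pi.mul_apply, ENNReal.toReal_mul,
    Real.log_mul (ENNReal.toReal_pos hμρ_pos.ne' hμρ_lt.ne).ne'
      (ENNReal.toReal_pos hρν_pos.ne' hρν_lt.ne).ne']

lemma integrable_llr_iff_of_integrable_llr [SigmaFinite μ] [SigmaFinite ρ] [SigmaFinite ν]
    (hμρ : μ ≪ ρ) (hρν : ρ ≪ ν) (h : Integrable (llr μ ρ) μ) :
    Integrable (llr μ ν) μ ↔ Integrable (llr ρ ν) μ := by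
  rw [integrable_congr (llr_ae_eq_llr_add_llr hμρ hρν)]
  exact integrable_add_iff_integrable_right h

lemma integral_llr_eq_add [SigmaFinite μ] [SigmaFinite ρ] [SigmaFinite ν]
    (hμρ : μ ≪ ρ) (hρν : ρ ≪ ν) (h₁ : Integrable (llr μ ρ) μ) (h₂ : Integrable (llr ρ ν) μ) :
    ∫ x, llr μ ν x ∂μ = ∫ x, llr μ ρ x ∂μ + ∫ x, llr ρ ν x ∂μ := by
  rw [integral_congr_ae (llr_ae_eq_llr_add_llr hμρ hρν), ← integral_add h₁ h₂]
  rfl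

/-- The density `dμ/dρ` is bounded by `c⁻¹`, and `klFun` is bounded on bounded sets, so the
integrability criterion `integrable_klFun_rnDeriv_iff` applies. -/
lemma integrable_llr_of_smul_le [IsFiniteMeasure μ] [IsFiniteMeasure ρ] {c : ℝ≥0∞}
    (hc0 : c ≠ 0) (hc : c ≠ ∞) (h : c • μ ≤ ρ) : Integrable (llr μ ρ) μ := by
  have hμρ : μ ≪ ρ :=
    (Measure.absolutelyContinuous_smul hc0).trans (Measure.absolutelyContinuous_of_le h)
  have hbound : ∀ᵐ x ∂ρ, (μ.rnDeriv ρ x).toReal ∈ Set.Icc 0 c⁻¹.toReal := by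
    filter_upwards [Measure.rnDeriv_le_one_of_le h, Measure.rnDeriv_smul_left_of_ne_top μ ρ hc]
      with x hle heq
    rw [heq, Pi.smul_apply, smul_eq_mul, Pi.one_apply, mul_comm,
      ← ENNReal.le_inv_iff_mul_le] at hle
    exact ⟨ENNReal.toReal_nonneg, ENNReal.toReal_mono (ENNReal.inv_ne_top.2 hc0) hle⟩
  obtain ⟨C, hC⟩ := isCompact_Icc.exists_bound_of_continuousOn
    InformationTheory.continuous_klFun.continuousOn
  rw [← InformationTheory.integrable_klFun_rnDeriv_iff hμρ]
  exact Integrable.of_bound (InformationTheory.measurable_klFun.comp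
    (Measure.measurable_rnDeriv μ ρ).ennreal_toReal).aestronglyMeasurable C
    (hbound.mono fun x hx => hC _ hx)

lemma mul_integral_llr_nonneg [IsProbabilityMeasure μ] [IsProbabilityMeasure ν] {t : ℝ}
    (ht : 0 ≤ t) (h : 0 < t → μ ≪ ν ∧ Integrable (llr μ ν) μ) :
    0 ≤ t * ∫ x, llr μ ν x ∂μ := by
  rcases ht.eq_or_lt with rfl | ht
  · rw [zero_mul]
  · exact mul_nonneg ht.le (integral_llr_nonneg (h ht).1 (h ht).2)

lemma ofReal_mul_klDiv {t : ℝ} (ht : 0 ≤ t) (h : 0 < t → μ ≪ ν ∧ Integrable (llr μ ν) μ) :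
    ENNReal.ofReal t * klDiv μ ν = ENNReal.ofReal (t * ∫ x, llr μ ν x ∂μ) := by
  rcases ht.eq_or_lt with rfl | ht
  · simp
  · rw [klDiv, if_pos (h ht), ← ENNReal.ofReal_mul ht.le]

lemma sum_ofReal_mul_klDiv {A : Type*} [Fintype A] {w : A → ℝ} (hw0 : ∀ a, 0 ≤ w a)
    {μ : A → Measure X} [∀ a, IsProbabilityMeasure (μ a)] [IsProbabilityMeasure ν]
    (h : ∀ a, 0 < w a → μ a ≪ ν ∧ Integrable (llr (μ a) ν) (μ a)) :
    ∑ a, ENNReal.ofReal (w a) * klDiv (μ a) ν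
      = ENNReal.ofReal (∑ a, w a * ∫ x, llr (μ a) ν x ∂μ a) := by
  rw [ENNReal.ofReal_sum_of_nonneg fun a _ => mul_integral_llr_nonneg (hw0 a) (h a)]
  exact Finset.sum_congr rfl fun a _ => ofReal_mul_klDiv (hw0 a) (h a)

end LogLikelihoodRatio

theorem compensation_identity_general {A X : Type*} [Fintype A] [MeasurableSpace X]
    (w : A → ℝ) (hw0 : ∀ a, 0 ≤ w a) (hw1 : ∑ a, w a = 1)
    (μ : A → Measure X) [∀ a, IsProbabilityMeasure (μ a)]
    (ν : Measure X) [IsProbabilityMeasure ν] (hac : ∀ a, 0 < w a → μ a ≪ ν) :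
    ∑ a, ENNReal.ofReal (w a) * klDiv (μ a) ν
      = (∑ a, ENNReal.ofReal (w a) * klDiv (μ a) (∑ a', ENNReal.ofReal (w a') • μ a'))
        + klDiv (∑ a', ENNReal.ofReal (w a') • μ a') ν := by
  set m := ∑ a', ENNReal.ofReal (w a') • μ a'
  have : IsProbabilityMeasure m := isProbabilityMeasure_sum_ofReal_smul hw0 hw1
  have hμm (a) (ha : 0 < w a) : μ a ≪ m := absolutelyContinuous_sum_ofReal_smul ha
  have hmν : m ≪ ν := sum_ofReal_smul_absolutelyContinuous hac
  have hllr_μm (a) (ha : 0 < w a) : Integrable (llr (μ a) m) (μ a) :=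
    integrable_llr_of_smul_le (by simpa using ha) ENNReal.ofReal_ne_top
      (smul_le_sum_ofReal_smul a)
  have hllr_iff (a) (ha : 0 < w a) :=
    integrable_llr_iff_of_integrable_llr (hμm a ha) hmν (hllr_μm a ha)
  by_cases hint : Integrable (llr m ν) m
  · have hint_a := integrable_sum_ofReal_smul_iff.1 hint
    rw [sum_ofReal_mul_klDiv hw0 fun a ha => ⟨hac a ha, (hllr_iff a ha).2 (hint_a a ha)⟩,
      sum_ofReal_mul_klDiv hw0 fun a ha => ⟨hμm a ha, hllr_μm a ha⟩, klDiv, if_pos ⟨hmν, hint⟩,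
      ← ENNReal.ofReal_add (Finset.sum_nonneg fun a _ =>
        mul_integral_llr_nonneg (hw0 a) fun ha => ⟨hμm a ha, hllr_μm a ha⟩)
        (integral_llr_nonneg hmν hint),
      integral_sum_ofReal_smul hw0 hint, ← Finset.sum_add_distrib]
    refine congrArg ENNReal.ofReal (Finset.sum_congr rfl fun a _ => ?_)
    rcases (hw0 a).eq_or_lt with h0 | ha
    · simp [← h0]
    · rw [integral_llr_eq_add (hμm a ha) hmν (hllr_μm a ha) (hint_a a ha), smul_eq_mul, mul_add]
  · obtain ⟨a, ha, hnot⟩ : ∃ a, 0 < w a ∧ ¬ Integrable (llr m ν) (μ a) := by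
      by_contra! h
      exact hint (integrable_sum_ofReal_smul_iff.2 h)
    have hμν_top : klDiv (μ a) ν = ⊤ := if_neg fun h => hnot ((hllr_iff a ha).1 h.2)
    rw [show klDiv m ν = ⊤ from if_neg fun h => hint h.2, add_top, ENNReal.sum_eq_top]
    exact ⟨a, Finset.mem_univ a, by rw [hμν_top, ENNReal.mul_top (by simpa using ha)]⟩

/-- Compensation identity: for the mixture `μ̄ = Σ_a w_a • μ_a` and any probability measure `ν`
with `μ_a ≪ ν` whenever `w_a > 0`, the weighted average divergence to `ν` equals the weighted
average divergence to the mixture plus the divergence of the mixture from `ν`. -/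
theorem compensation_identity {A X : Type*} [Fintype A] [Nonempty A] [MeasurableSpace X]
    (w : A → ℝ) (hw0 : ∀ a, 0 ≤ w a) (hw1 : ∑ a, w a = 1)
    (μ : A → Measure X) [∀ a, IsProbabilityMeasure (μ a)]
    (ν : Measure X) [IsProbabilityMeasure ν] (hac : ∀ a, 0 < w a → μ a ≪ ν) :
    ∑ a, ENNReal.ofReal (w a) * klDiv (μ a) ν
      = (∑ a, ENNReal.ofReal (w a) * klDiv (μ a) (∑ a', ENNReal.ofReal (w a') • μ a'))
        + klDiv (∑ a', ENNReal.ofReal (w a') • μ a') ν :=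
  compensation_identity_general w hw0 hw1 μ ν hac
end

section
/- Let X be a measurable space, let p and q be probability measures on X with p ≪ q, and let r, s ∈ (0, 1). On the space Option X define the Bernoulli measures μ = (1 − r) • δ(none) + r • (map some p) and ν = (1 − s) • δ(none) + s • (map some q), where map some denotes the pushforward under the embedding some : X → Option X. Then klDiv(μ, ν) = (1 − r)·log((1 − r)/(1 − s)) + r·log(r/s) + r·klDiv(p, q). -/
open MeasureTheory
open scoped ENNReal Classical

/-- The measurable space on `Option X`, transported from `X ⊕ PUnit` (so `{none}` is
measurable and `some` is a measurable embedding). -/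
noncomputable instance optionMeasurableSpace {X : Type*} [MeasurableSpace X] :
    MeasurableSpace (Option X) :=
  MeasurableSpace.comap ((Equiv.optionEquivSumPUnit X : Option X ≃ (X ⊕ PUnit.{1}))) inferInstance

/-!
Write `μ` and `ν` for the two Bernoulli measures. `μ = ν.withDensity f`, where `f` is
`(1 - r)/(1 - s)` at `none` and `(r/s) · dp/dq` along `some`, so `log (dμ/dν)` equals
`log ((1 - r)/(1 - s))` at the atom `none` and `log (r/s) + log (dp/dq)` `p`-a.e. along `some`.
Integrating against `μ` gives `(1 - r) log ((1 - r)/(1 - s)) + r (log (r/s) + ∫ log (dp/dq) dp)`,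
and both `log (dμ/dν)` and `log (dp/dq)` are integrable or neither is. To split `ofReal` over
the sum, both summands must be nonnegative: the second by Gibbs' inequality, the first because
it equals `(1 - s) φ ((1 - r)/(1 - s)) + s φ (r/s)` with `φ x = x log x + 1 - x ≥ 0`.
-/

open Real

open InformationTheory in
lemma mul_log_div_add_mul_log_div_nonneg {a b c d : ℝ} (ha : 0 ≤ a) (hb : 0 ≤ b) (hc : 0 < c)
    (hd : 0 < d) (habcd : a + b = c + d) :
    0 ≤ a * log (a / c) + b * log (b / d) := by
  have hsum : a * log (a / c) + b * log (b / d) = c * klFun (a / c) + d * klFun (b / d) := by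
    simp only [klFun_apply]
    field_simp
    linear_combination habcd
  rw [hsum]
  exact add_nonneg (mul_nonneg hc.le (klFun_nonneg (by positivity)))
    (mul_nonneg hd.le (klFun_nonneg (by positivity)))

open InformationTheory in
lemma integral_llr_nonneg_s7 {X : Type*} [MeasurableSpace X] {p q : Measure X}
    [IsProbabilityMeasure p] [IsProbabilityMeasure q] (hpq : p ≪ q)
    (hint : Integrable (llr p q) p) : 0 ≤ ∫ x, llr p q x ∂p := by
  simpa using integral_llr_add_sub_measure_univ_nonneg hpq hint

lemma log_toReal_ofReal_mul_rnDeriv_ae {X : Type*} [MeasurableSpace X] {p q : Measure X}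
    [SigmaFinite p] [p.HaveLebesgueDecomposition q] (hpq : p ≪ q) {c : ℝ} (hc : 0 < c) :
    ∀ᵐ x ∂p, log (ENNReal.ofReal c * p.rnDeriv q x).toReal = log c + llr p q x := by
  filter_upwards [Measure.rnDeriv_pos hpq, hpq.ae_le (Measure.rnDeriv_lt_top p q)]
    with x hpos hlt
  rw [ENNReal.toReal_mul, ENNReal.toReal_ofReal hc.le, log_mul hc.ne', llr_def]
  exact ENNReal.toReal_ne_zero.mpr ⟨hpos.ne', hlt.ne⟩

lemma llr_withDensity_ae {X : Type*} [MeasurableSpace X] (ν : Measure X) [SigmaFinite ν]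
    {f : X → ℝ≥0∞} (hf : Measurable f) :
    llr (ν.withDensity f) ν =ᵐ[ν.withDensity f] fun x => log (f x).toReal :=
  (withDensity_absolutelyContinuous ν f).ae_le <| by
    filter_upwards [Measure.rnDeriv_withDensity ν hf] with x hx
    simp only [llr_def, hx]

lemma withDensity_map {α β : Type*} [MeasurableSpace α] [MeasurableSpace β] {g : α → β}
    (hg : Measurable g) (μ : Measure α) {f : β → ℝ≥0∞} (hf : Measurable f) :
    (μ.map g).withDensity f = (μ.withDensity (f ∘ g)).map g := by
  ext s hs
  rw [withDensity_apply _ hs, Measure.map_apply hg hs, withDensity_apply _ (hg hs),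
    setLIntegral_map hs hf hg]
  rfl

section OptionMeasurable

variable {X : Type*} [MeasurableSpace X]

def optionMeasurableEquiv (X : Type*) [MeasurableSpace X] : Option X ≃ᵐ X ⊕ PUnit.{1} where
  toEquiv := Equiv.optionEquivSumPUnit X
  measurable_toFun := Measurable.of_comap_le le_rfl
  measurable_invFun := by
    rintro _ ⟨t, ht, rfl⟩
    simpa [Set.preimage_preimage] using ht

lemma measurableEmbedding_some : MeasurableEmbedding (Option.some : X → Option X) :=
  (optionMeasurableEquiv X).symm.measurableEmbedding.comp
    ⟨Sum.inl_injective, measurable_inl, fun _ hs => hs.inl_image⟩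

lemma Measurable.option_elim {β : Type*} [MeasurableSpace β] {f : X → β} (hf : Measurable f)
    (c : β) : Measurable (fun o : Option X => o.elim c f) := by
  have h : (fun o : Option X => o.elim c f) =
      Sum.elim f (fun _ => c) ∘ optionMeasurableEquiv X := by
    funext o
    cases o <;> rfl
  exact h ▸ (hf.sumElim measurable_const).comp (optionMeasurableEquiv X).measurable

end OptionMeasurable

/-- The Bernoulli random finite set with probability of existence `r` and single-target
distribution `p`. -/
noncomputable def bernoulliRFS {X : Type*} [MeasurableSpace X] (r : ℝ) (p : Measure X) :
    Measure (Option X) :=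
  ENNReal.ofReal (1 - r) • Measure.dirac none + ENNReal.ofReal r • p.map Option.some

namespace bernoulliRFS

variable {X : Type*} [MeasurableSpace X] {p q : Measure X} {r s : ℝ}

instance [IsFiniteMeasure p] : IsFiniteMeasure (bernoulliRFS r p) :=
  ⟨by simp [bernoulliRFS, ENNReal.mul_lt_top, measure_lt_top]⟩

lemma eq_withDensity [p.HaveLebesgueDecomposition q] (hpq : p ≪ q)
    (hs : s ∈ Set.Ioo (0 : ℝ) 1) :
    bernoulliRFS r p = (bernoulliRFS s q).withDensity
      (fun o => o.elim (ENNReal.ofReal ((1 - r) / (1 - s)))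
        (fun x => ENNReal.ofReal (r / s) * p.rnDeriv q x)) := by
  obtain ⟨hs0, hs1⟩ := hs
  set f : Option X → ℝ≥0∞ := fun o => o.elim (ENNReal.ofReal ((1 - r) / (1 - s)))
    (fun x => ENNReal.ofReal (r / s) * p.rnDeriv q x)
  have hD : Measurable (p.rnDeriv q) := Measure.measurable_rnDeriv p q
  have hf : Measurable f := (hD.const_mul _).option_elim _
  have hnone : f none = ENNReal.ofReal ((1 - r) / (1 - s)) := rfl
  have hmap : (q.map Option.some).withDensity f = ENNReal.ofReal (r / s) • p.map Option.some := by
    rw [withDensity_map measurableEmbedding_some.measurable q hf]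
    change Measure.map some (q.withDensity (ENNReal.ofReal (r / s) • p.rnDeriv q)) = _
    rw [withDensity_smul _ hD, Measure.withDensity_rnDeriv_eq p q hpq, Measure.map_smul]
  rw [bernoulliRFS, bernoulliRFS, withDensity_add_measure, withDensity_smul_measure,
    withDensity_smul_measure, dirac_withDensity' hf, hnone, hmap, smul_smul, smul_smul,
    ← ENNReal.ofReal_mul (by linarith), ← ENNReal.ofReal_mul hs0.le,
    mul_div_cancel₀ _ (by linarith : 1 - s ≠ 0), mul_div_cancel₀ _ hs0.ne']

lemma absolutelyContinuous [p.HaveLebesgueDecomposition q] (hpq : p ≪ q)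
    (hs : s ∈ Set.Ioo (0 : ℝ) 1) : bernoulliRFS r p ≪ bernoulliRFS s q :=
  eq_withDensity hpq hs ▸ withDensity_absolutelyContinuous _ _

lemma none_and_ae_some_of_ae (hr : r ∈ Set.Ioo (0 : ℝ) 1) {P : Option X → Prop}
    (h : ∀ᵐ o ∂bernoulliRFS r p, P o) : P none ∧ ∀ᵐ x ∂p, P (some x) := by
  obtain ⟨hnone, hsome⟩ := ae_add_measure_iff.1 h
  refine ⟨?_, measurableEmbedding_some.ae_map_iff.1
    ((Measure.absolutelyContinuous_smul (ENNReal.ofReal_pos.2 hr.1).ne').ae_le hsome)⟩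
  have hdirac :=
    (Measure.absolutelyContinuous_smul (ENNReal.ofReal_pos.2 (sub_pos.2 hr.2)).ne').ae_le hnone
  by_contra hP
  simpa [Measure.dirac_apply_of_mem (s := {o | ¬P o}) hP] using ae_iff.1 hdirac

lemma integrable_dirac_none_smul {g : Option X → ℝ} (hg : Measurable g) :
    Integrable g (ENNReal.ofReal (1 - r) • Measure.dirac none) :=
  (integrable_dirac' hg.stronglyMeasurable enorm_lt_top).smul_measure ENNReal.ofReal_ne_top

lemma integrable_iff (hr : 0 < r) {g : Option X → ℝ} (hg : Measurable g) :
    Integrable g (bernoulliRFS r p) ↔ Integrable (fun x => g (some x)) p := by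
  rw [bernoulliRFS, integrable_add_measure,
    integrable_smul_measure (ENNReal.ofReal_pos.2 hr).ne' ENNReal.ofReal_ne_top,
    measurableEmbedding_some.integrable_map_iff]
  exact and_iff_right (integrable_dirac_none_smul hg)

lemma integral_eq (hr : r ∈ Set.Icc (0 : ℝ) 1) {g : Option X → ℝ} (hg : Measurable g)
    (hint : Integrable (fun x => g (some x)) p) :
    ∫ o, g o ∂bernoulliRFS r p = (1 - r) * g none + r * ∫ x, g (some x) ∂p := by
  rw [bernoulliRFS, integral_add_measure (integrable_dirac_none_smul hg)
    ((measurableEmbedding_some.integrable_map_iff.2 hint).smul_measure ENNReal.ofReal_ne_top),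
    integral_smul_measure, integral_smul_measure, integral_dirac' _ _ hg.stronglyMeasurable,
    measurableEmbedding_some.integral_map, ENNReal.toReal_ofReal (sub_nonneg.2 hr.2),
    ENNReal.toReal_ofReal hr.1, smul_eq_mul, smul_eq_mul]

lemma llr_eq [SigmaFinite p] [IsFiniteMeasure q] (hpq : p ≪ q) (hr : r ∈ Set.Ioo (0 : ℝ) 1)
    (hs : s ∈ Set.Ioo (0 : ℝ) 1) :
    llr (bernoulliRFS r p) (bernoulliRFS s q) none = log ((1 - r) / (1 - s)) ∧
      ∀ᵐ x ∂p,
        llr (bernoulliRFS r p) (bernoulliRFS s q) (some x) = log (r / s) + llr p q x := by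
  set f : Option X → ℝ≥0∞ := fun o => o.elim (ENNReal.ofReal ((1 - r) / (1 - s)))
    (fun x => ENNReal.ofReal (r / s) * p.rnDeriv q x)
  have hf : Measurable f := ((Measure.measurable_rnDeriv p q).const_mul _).option_elim _
  have hllr : llr (bernoulliRFS r p) (bernoulliRFS s q)
      =ᵐ[bernoulliRFS r p] fun o => log (f o).toReal := by
    rw [eq_withDensity hpq hs]
    exact llr_withDensity_ae _ hf
  obtain ⟨hnone, hsome⟩ := none_and_ae_some_of_ae hr hllr
  refine ⟨hnone.trans ?_, ?_⟩
  · change log (ENNReal.ofReal ((1 - r) / (1 - s))).toReal = _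
    rw [ENNReal.toReal_ofReal (div_nonneg (sub_nonneg.2 hr.2.le) (sub_nonneg.2 hs.2.le))]
  · filter_upwards [hsome, log_toReal_ofReal_mul_rnDeriv_ae hpq (div_pos hr.1 hs.1)]
      with x h1 h2
    exact h1.trans h2

end bernoulliRFS

/-- KL divergence between two Bernoulli random-finite-set measures on `Option X` with
existence probabilities `r, s ∈ (0,1)` and single-target densities `p ≪ q`:
`D(μ‖ν) = (1−r)log((1−r)/(1−s)) + r log(r/s) + r D(p‖q)`. -/
theorem klDiv_bernoulli {X : Type*} [MeasurableSpace X]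
    (p q : Measure X) [IsProbabilityMeasure p] [IsProbabilityMeasure q] (hpq : p ≪ q)
    (r s : ℝ) (hr : r ∈ Set.Ioo (0 : ℝ) 1) (hs : s ∈ Set.Ioo (0 : ℝ) 1) :
    klDiv
      (ENNReal.ofReal (1 - r) • Measure.dirac (none : Option X)
        + ENNReal.ofReal r • p.map Option.some)
      (ENNReal.ofReal (1 - s) • Measure.dirac (none : Option X)
        + ENNReal.ofReal s • q.map Option.some)
    = ENNReal.ofReal ((1 - r) * Real.log ((1 - r) / (1 - s)) + r * Real.log (r / s))
      + ENNReal.ofReal r * klDiv p q := by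
  change klDiv (bernoulliRFS r p) (bernoulliRFS s q) = _
  obtain ⟨hllr_none, hllr_some⟩ := bernoulliRFS.llr_eq hpq hr hs
  have hint_some : Integrable (fun x => llr (bernoulliRFS r p) (bernoulliRFS s q) (some x)) p
      ↔ Integrable (llr p q) p := by
    rw [integrable_congr hllr_some]
    exact integrable_add_iff_integrable_right' (integrable_const _)
  have hint : Integrable (llr (bernoulliRFS r p) (bernoulliRFS s q)) (bernoulliRFS r p)
      ↔ Integrable (llr p q) p :=
    (bernoulliRFS.integrable_iff hr.1 (measurable_llr _ _)).trans hint_some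
  by_cases hI : Integrable (llr p q) p
  · have hK := mul_log_div_add_mul_log_div_nonneg (sub_nonneg.2 hr.2.le) hr.1.le
      (sub_pos.2 hs.2) hs.1 (by ring : 1 - r + r = 1 - s + s)
    rw [klDiv, if_pos ⟨bernoulliRFS.absolutelyContinuous hpq hs, hint.2 hI⟩, klDiv,
      if_pos ⟨hpq, hI⟩,
      bernoulliRFS.integral_eq (Set.Ioo_subset_Icc_self hr) (measurable_llr _ _)
        (hint_some.2 hI), hllr_none, integral_congr_ae hllr_some,
      integral_add (integrable_const _) hI, integral_const, probReal_univ, one_smul,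
      ← ENNReal.ofReal_mul hr.1.le,
      ← ENNReal.ofReal_add hK (mul_nonneg hr.1.le (integral_llr_nonneg_s7 hpq hI))]
    congr 1
    ring
  · rw [klDiv, if_neg (fun h => hI (hint.1 h.2)), klDiv, if_neg (fun h => hI h.2),
      ENNReal.mul_top (ENNReal.ofReal_pos.2 hr.1).ne', add_top]
end

section
/- Let d be a positive natural number, let m₁, m₂ ∈ ℝ^d (as EuclideanSpace ℝ (Fin d)), and let P₁, P₂ be positive-definite real d×d matrices. Then the Kullback–Leibler divergence between the corresponding multivariate Gaussian measures satisfies klDiv(N(m₁, P₁), N(m₂, P₂)) = (1/2) · ( trace(P₂⁻¹ P₁) − log(det P₁ / det P₂) − d + (m₂ − m₁)ᵀ P₂⁻¹ (m₂ − m₁) ). -/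
open MeasureTheory
open scoped ENNReal Classical

/-- Density of the multivariate Gaussian with mean `m` and covariance matrix `S` on `ℝ^d`. -/
noncomputable def gaussianPdf {d : ℕ} (m : EuclideanSpace ℝ (Fin d))
    (S : Matrix (Fin d) (Fin d) ℝ) (x : EuclideanSpace ℝ (Fin d)) : ℝ≥0∞ :=
  ENNReal.ofReal ((Real.sqrt ((2 * Real.pi) ^ d * S.det))⁻¹ *
    Real.exp (-(1 / 2) * dotProduct (WithLp.ofLp (x - m)) (S⁻¹.mulVec (WithLp.ofLp (x - m)))))

/-- The multivariate Gaussian probability measure `N(m, S)` on `ℝ^d`, for a mean vector `m`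
and a (positive-definite) covariance matrix `S`. -/
noncomputable def gaussianMeasure {d : ℕ} (m : EuclideanSpace ℝ (Fin d))
    (S : Matrix (Fin d) (Fin d) ℝ) : Measure (EuclideanSpace ℝ (Fin d)) :=
  volume.withDensity (gaussianPdf m S)

/-!
The density `gaussianPdf m S` is that of Mathlib's `multivariateGaussian m S`: the standard
Gaussian is the product of one-dimensional ones, and `multivariateGaussian m S` is its image
under `x ↦ m + √S x`, whose density follows by the linear change of variables. Once this is known,
the log-likelihood ratio is `½ (q₂ - q₁ - log (det P₁ / det P₂))`, where `qₖ` is the quadratic form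
in the exponent of the `k`-th density, and a quadratic form `(x - c)ᵀ A (x - c)` has expectation
`(m - c)ᵀ A (m - c) + tr (A S)` under any law with mean `m` and covariance matrix `S`.
-/

open ProbabilityTheory Matrix WithLp

theorem Real.sqrt_pow {a : ℝ} (ha : 0 ≤ a) (n : ℕ) : √(a ^ n) = √a ^ n := by
  rw [Real.sqrt_eq_iff_mul_self_eq (pow_nonneg ha n) (pow_nonneg (Real.sqrt_nonneg a) n),
    ← mul_pow, Real.mul_self_sqrt ha]

theorem MeasurableEquiv.map_withDensity {α β : Type*} [MeasurableSpace α] [MeasurableSpace β]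
    (e : α ≃ᵐ β) (μ : Measure α) (f : α → ℝ≥0∞) :
    (μ.withDensity f).map e = (μ.map e).withDensity (f ∘ e.symm) := by
  ext s hs
  rw [e.map_apply, withDensity_apply _ (e.measurable hs), withDensity_apply _ hs, e.restrict_map,
    lintegral_map_equiv]
  simp

namespace MeasureTheory.Measure

theorem pi_withDensity_ofReal {ι : Type*} [Fintype ι] {α : ι → Type*}
    [∀ i, MeasurableSpace (α i)] (μ : ∀ i, Measure (α i)) [∀ i, SigmaFinite (μ i)]
    {g : ∀ i, α i → ℝ} (hg_nonneg : ∀ i x, 0 ≤ g i x) (hg : ∀ i, Integrable (g i) (μ i)) :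
    Measure.pi (fun i => (μ i).withDensity fun x => ENNReal.ofReal (g i x))
      = (Measure.pi μ).withDensity fun x => ENNReal.ofReal (∏ i, g i (x i)) := by
  refine pi_eq fun s hs => ?_
  rw [withDensity_apply _ (MeasurableSet.univ_pi hs), restrict_pi_pi,
    ← ofReal_integral_eq_lintegral_ofReal ?_ ?_, integral_fintype_prod_eq_prod,
    ENNReal.ofReal_prod_of_nonneg fun i _ => integral_nonneg (hg_nonneg i)]
  · refine Finset.prod_congr rfl fun i _ => ?_
    rw [withDensity_apply _ (hs i), ofReal_integral_eq_lintegral_ofReal (hg i).restrict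
      (Filter.Eventually.of_forall (hg_nonneg i))]
  · exact Integrable.fintype_prod_dep fun i => (hg i).restrict
  · exact Filter.Eventually.of_forall fun x => Finset.prod_nonneg fun i _ => hg_nonneg i _

theorem rnDeriv_withDensity_withDensity {α : Type*} [MeasurableSpace α]
    (ν : Measure α) [SigmaFinite ν] {f g : α → ℝ≥0∞} (hf : Measurable f) (hg : Measurable g)
    (hg_ne_zero : ∀ᵐ x ∂ν, g x ≠ 0) (hg_ne_top : ∀ᵐ x ∂ν, g x ≠ ∞)
    [SigmaFinite (ν.withDensity f)] :
    (ν.withDensity f).rnDeriv (ν.withDensity g) =ᵐ[ν] fun x => (g x)⁻¹ * f x := by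
  filter_upwards [rnDeriv_withDensity_right (ν.withDensity f) ν hg.aemeasurable
    hg_ne_zero hg_ne_top, rnDeriv_withDensity ν hf] with x hx hfx
  rw [hx, hfx]

end MeasureTheory.Measure

theorem integral_sub_mul_sub {Ω : Type*} [MeasurableSpace Ω] {μ : Measure Ω}
    [IsProbabilityMeasure μ] {X Y : Ω → ℝ} (hX : MemLp X 2 μ) (hY : MemLp Y 2 μ) (a b : ℝ) :
    ∫ ω, (X ω - a) * (Y ω - b) ∂μ = cov[X, Y; μ] + (μ[X] - a) * (μ[Y] - b) := by
  have hcov := covariance_eq_sub (hX.sub (memLp_const a)) (hY.sub (memLp_const b))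
  rw [Pi.sub_def, Pi.sub_def, covariance_sub_const_left (hX.integrable one_le_two),
    covariance_sub_const_right (hY.integrable one_le_two)] at hcov
  rw [hcov, integral_sub (hX.integrable one_le_two) (integrable_const a),
    integral_sub (hY.integrable one_le_two) (integrable_const b)]
  simp

theorem dotProduct_mulVec_self_eq_sum {ι : Type*} [Fintype ι] (A : Matrix ι ι ℝ) (v : ι → ℝ) :
    v ⬝ᵥ A *ᵥ v = ∑ i, ∑ j, A i j * (v i * v j) := by
  simp only [dotProduct, mulVec, Finset.mul_sum]
  exact Finset.sum_congr rfl fun i _ => Finset.sum_congr rfl fun j _ => by ring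

section QuadraticForm

variable {ι : Type*} [Fintype ι] {μ : Measure (EuclideanSpace ℝ ι)}

theorem memLp_eval_of_memLp_id (hμ : MemLp id 2 μ) (i : ι) : MemLp (fun x => x i) 2 μ :=
  (EuclideanSpace.proj i : EuclideanSpace ℝ ι →L[ℝ] ℝ).comp_memLp' hμ

theorem integrable_sub_mul_sub_eval [IsFiniteMeasure μ] (hμ : MemLp id 2 μ)
    (c : EuclideanSpace ℝ ι) (i j : ι) :
    Integrable (fun x => (x i - c i) * (x j - c j)) μ :=
  ((memLp_eval_of_memLp_id hμ i).sub (memLp_const _)).integrable_mul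
    ((memLp_eval_of_memLp_id hμ j).sub (memLp_const _))

theorem integrable_quadForm_sub [IsFiniteMeasure μ] (hμ : MemLp id 2 μ) (A : Matrix ι ι ℝ)
    (c : EuclideanSpace ℝ ι) :
    Integrable (fun x => ofLp (x - c) ⬝ᵥ A *ᵥ ofLp (x - c)) μ := by
  simp only [dotProduct_mulVec_self_eq_sum, ofLp_sub, Pi.sub_apply]
  exact integrable_finsetSum _ fun i _ => integrable_finsetSum _ fun j _ =>
    (integrable_sub_mul_sub_eval hμ c i j).const_mul _

theorem integral_quadForm_sub [IsProbabilityMeasure μ] (hμ : MemLp id 2 μ) (A : Matrix ι ι ℝ)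
    (c : EuclideanSpace ℝ ι) :
    ∫ x, ofLp (x - c) ⬝ᵥ A *ᵥ ofLp (x - c) ∂μ
      = ofLp (μ[id] - c) ⬝ᵥ A *ᵥ ofLp (μ[id] - c)
        + ∑ i, ∑ j, A i j * cov[fun x => x i, fun x => x j; μ] := by
  have hmean : ∀ i, μ[fun x => x i] = μ[id] i := fun i =>
    (EuclideanSpace.proj i : EuclideanSpace ℝ ι →L[ℝ] ℝ).integral_comp_comm
      (hμ.integrable one_le_two)
  simp only [dotProduct_mulVec_self_eq_sum, ofLp_sub, Pi.sub_apply]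
  rw [integral_finsetSum _ fun i _ => integrable_finsetSum _ fun j _ =>
    (integrable_sub_mul_sub_eval hμ c i j).const_mul (A i j)]
  simp only [integral_finsetSum _ fun j _ => (integrable_sub_mul_sub_eval hμ c _ j).const_mul _,
    integral_const_mul, integral_sub_mul_sub (memLp_eval_of_memLp_id hμ _)
      (memLp_eval_of_memLp_id hμ _), hmean, mul_add, Finset.sum_add_distrib, add_comm]

theorem integral_quadForm_sub_multivariateGaussian [DecidableEq ι] (m c : EuclideanSpace ℝ ι)
    {S : Matrix ι ι ℝ} (hS : S.PosSemidef) (A : Matrix ι ι ℝ) :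
    ∫ x, ofLp (x - c) ⬝ᵥ A *ᵥ ofLp (x - c) ∂(multivariateGaussian m S)
      = ofLp (m - c) ⬝ᵥ A *ᵥ ofLp (m - c) + (A * S).trace := by
  rw [integral_quadForm_sub IsGaussian.memLp_two_id, integral_id_multivariateGaussian']
  simp only [covariance_eval_multivariateGaussian hS, trace, diag, mul_apply]
  congr 1
  exact Finset.sum_congr rfl fun i _ => Finset.sum_congr rfl fun j _ => by
    rw [← hS.isHermitian.apply j i, star_trivial]

end QuadraticForm

theorem Matrix.det_toEuclideanLin {n : Type*} [Fintype n] [DecidableEq n] (L : Matrix n n ℝ) :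
    LinearMap.det (toEuclideanLin L) = L.det := by
  rw [← LinearMap.det_toLin (EuclideanSpace.basisFun n ℝ).toBasis L]
  congr 1

noncomputable def Matrix.toEuclideanMeasurableEquiv {n : Type*} [Fintype n] [DecidableEq n]
    (L : Matrix n n ℝ) (hL : IsUnit L.det) : EuclideanSpace ℝ n ≃ᵐ EuclideanSpace ℝ n where
  toFun := toEuclideanCLM (𝕜 := ℝ) L
  invFun := toEuclideanCLM (𝕜 := ℝ) L⁻¹
  left_inv x := by
    rw [← ContinuousLinearMap.comp_apply, ← ContinuousLinearMap.mul_def, ← map_mul,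
      nonsing_inv_mul L hL, map_one]; rfl
  right_inv x := by
    rw [← ContinuousLinearMap.comp_apply, ← ContinuousLinearMap.mul_def, ← map_mul,
      mul_nonsing_inv L hL, map_one]; rfl
  measurable_toFun := (toEuclideanCLM (𝕜 := ℝ) L).continuous.measurable
  measurable_invFun := (toEuclideanCLM (𝕜 := ℝ) L⁻¹).continuous.measurable

theorem prod_gaussianPDFReal_zero_one {ι : Type*} [Fintype ι] (x : ι → ℝ) :
    ∏ i, gaussianPDFReal 0 1 (x i)
      = (√(2 * Real.pi) ^ Fintype.card ι)⁻¹ * Real.exp (-(1 / 2) * (x ⬝ᵥ x)) := by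
  simp only [gaussianPDFReal, NNReal.coe_one, mul_one, sub_zero, Finset.prod_mul_distrib,
    Finset.prod_const, Finset.card_univ, inv_pow, ← Real.exp_sum, dotProduct, Finset.mul_sum]
  congr 2
  exact Finset.sum_congr rfl fun i _ => by ring

noncomputable def gaussianPdfReal {d : ℕ} (m : EuclideanSpace ℝ (Fin d))
    (S : Matrix (Fin d) (Fin d) ℝ) (x : EuclideanSpace ℝ (Fin d)) : ℝ :=
  (√((2 * Real.pi) ^ d * S.det))⁻¹ * Real.exp (-(1 / 2) * ofLp (x - m) ⬝ᵥ S⁻¹ *ᵥ ofLp (x - m))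

section GaussianDensity

variable {d : ℕ} (m : EuclideanSpace ℝ (Fin d)) (S : Matrix (Fin d) (Fin d) ℝ)

theorem gaussianPdf_eq_ofReal :
    gaussianPdf m S = fun x => ENNReal.ofReal (gaussianPdfReal m S x) := rfl

theorem measurable_gaussianPdf : Measurable (gaussianPdf m S) := by
  rw [gaussianPdf_eq_ofReal]
  unfold gaussianPdfReal
  fun_prop

theorem gaussianPdf_sub (μ x : EuclideanSpace ℝ (Fin d)) :
    gaussianPdf μ S (x - m) = gaussianPdf (m + μ) S x := by
  rw [gaussianPdf, gaussianPdf, sub_sub]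

theorem gaussianMeasure_map_const_add (μ : EuclideanSpace ℝ (Fin d)) :
    (gaussianMeasure μ S).map (m + ·) = gaussianMeasure (m + μ) S := by
  rw [gaussianMeasure, ← MeasurableEquiv.coe_addLeft, MeasurableEquiv.map_withDensity,
    MeasurableEquiv.coe_addLeft, map_add_left_eq_self, gaussianMeasure]
  congr 1
  ext x
  simp [← gaussianPdf_sub, sub_eq_neg_add]

variable {S}

theorem gaussianPdfReal_pos (hS : S.PosDef) (x : EuclideanSpace ℝ (Fin d)) :
    0 < gaussianPdfReal m S x := by
  have := hS.det_pos
  unfold gaussianPdfReal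
  positivity

theorem log_gaussianPdfReal (hS : S.PosDef) (x : EuclideanSpace ℝ (Fin d)) :
    Real.log (gaussianPdfReal m S x)
      = -(1 / 2) * (Real.log ((2 * Real.pi) ^ d * S.det)
          + ofLp (x - m) ⬝ᵥ S⁻¹ *ᵥ ofLp (x - m)) := by
  have := hS.det_pos
  rw [gaussianPdfReal, Real.log_mul (by positivity) (Real.exp_ne_zero _), Real.log_inv,
    Real.log_sqrt (by positivity), Real.log_exp]
  ring

theorem gaussianPdf_ne_zero (hS : S.PosDef) (x : EuclideanSpace ℝ (Fin d)) :
    gaussianPdf m S x ≠ 0 :=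
  (ENNReal.ofReal_pos.mpr (gaussianPdfReal_pos m hS x)).ne'

theorem gaussianMeasure_absolutelyContinuous (m' : EuclideanSpace ℝ (Fin d))
    (S' : Matrix (Fin d) (Fin d) ℝ) (hS : S.PosDef) :
    gaussianMeasure m' S' ≪ gaussianMeasure m S :=
  (withDensity_absolutelyContinuous _ _).trans <| withDensity_absolutelyContinuous'
    (measurable_gaussianPdf m S).aemeasurable (ae_of_all _ (gaussianPdf_ne_zero m hS))

end GaussianDensity

section GaussianMeasure

variable {d : ℕ}

theorem ofReal_abs_det_inv_mul_gaussianPdf (S L : Matrix (Fin d) (Fin d) ℝ)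
    (x : EuclideanSpace ℝ (Fin d)) :
    ENNReal.ofReal |L⁻¹.det| * gaussianPdf 0 S (toEuclideanCLM (𝕜 := ℝ) L⁻¹ x)
      = gaussianPdf 0 (L * S * Lᵀ) x := by
  have hquad : ∀ v : Fin d → ℝ,
      v ⬝ᵥ (L * S * Lᵀ)⁻¹ *ᵥ v = (L⁻¹ *ᵥ v) ⬝ᵥ S⁻¹ *ᵥ (L⁻¹ *ᵥ v) := fun v => by
    rw [Matrix.mul_inv_rev, Matrix.mul_inv_rev, ← transpose_nonsing_inv,
      ← mulVec_mulVec, ← mulVec_mulVec, dotProduct_mulVec, vecMul_transpose]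
  have hdet : √((2 * Real.pi) ^ d * (L * S * Lᵀ).det)
      = √((2 * Real.pi) ^ d * S.det) * |L.det| := by
    rw [det_mul, det_mul, det_transpose, ← Real.sqrt_sq_eq_abs, ← Real.sqrt_mul' _ (sq_nonneg _)]
    ring_nf
  rw [gaussianPdf, gaussianPdf, ← ENNReal.ofReal_mul (abs_nonneg _), hdet, sub_zero, sub_zero,
    ofLp_toEuclideanCLM, hquad, det_nonsing_inv, Ring.inverse_eq_inv', abs_inv, mul_inv,
    ← mul_assoc, mul_comm |L.det|⁻¹]

theorem gaussianMeasure_map_toEuclideanCLM (S : Matrix (Fin d) (Fin d) ℝ)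
    {L : Matrix (Fin d) (Fin d) ℝ} (hL : IsUnit L.det) :
    (gaussianMeasure 0 S).map (toEuclideanCLM (𝕜 := ℝ) L) = gaussianMeasure 0 (L * S * Lᵀ) := by
  have hvol : (volume : Measure (EuclideanSpace ℝ (Fin d))).map (toEuclideanCLM (𝕜 := ℝ) L)
      = ENNReal.ofReal |L⁻¹.det| • volume := by
    rw [← ContinuousLinearMap.coe_coe, coe_toEuclideanCLM_eq_toEuclideanLin,
      Measure.map_linearMap_addHaar_eq_smul_addHaar _
        (by rwa [det_toEuclideanLin, ← isUnit_iff_ne_zero]),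
      det_toEuclideanLin, det_nonsing_inv, Ring.inverse_eq_inv']
  have he : ⇑(L.toEuclideanMeasurableEquiv hL) = toEuclideanCLM (𝕜 := ℝ) L := rfl
  rw [gaussianMeasure, ← he, MeasurableEquiv.map_withDensity, he, hvol, withDensity_smul_measure,
    ← withDensity_smul' _ _ ENNReal.ofReal_ne_top, gaussianMeasure]
  congr 1
  ext x
  exact ofReal_abs_det_inv_mul_gaussianPdf S L x

theorem stdGaussian_eq_gaussianMeasure :
    stdGaussian (EuclideanSpace ℝ (Fin d)) = gaussianMeasure 0 1 := by
  have hpdf : ∀ v : Fin d → ℝ, gaussianPdf (0 : EuclideanSpace ℝ (Fin d)) 1 (toLp 2 v)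
      = ENNReal.ofReal (∏ i, gaussianPDFReal 0 1 (v i)) := fun v => by
    rw [gaussianPdf, prod_gaussianPDFReal_zero_one]
    simp [Real.sqrt_pow (by positivity : (0 : ℝ) ≤ 2 * Real.pi)]
  rw [← map_pi_eq_stdGaussian]
  simp_rw [gaussianReal_of_var_ne_zero 0 one_ne_zero, gaussianPDF_def]
  rw [Measure.pi_withDensity_ofReal _ (fun _ => gaussianPDFReal_nonneg 0 1)
      (fun _ => integrable_gaussianPDFReal 0 1),
    ← MeasurableEquiv.coe_toLp, MeasurableEquiv.map_withDensity, ← volume_pi,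
    MeasurableEquiv.coe_toLp, (PiLp.volume_preserving_toLp (Fin d)).map_eq, gaussianMeasure]
  congr 1
  ext x
  rw [Function.comp_apply, ← hpdf]
  rfl

open scoped MatrixOrder in
theorem gaussianMeasure_eq_multivariateGaussian (m : EuclideanSpace ℝ (Fin d))
    {S : Matrix (Fin d) (Fin d) ℝ} (hS : S.PosDef) :
    gaussianMeasure m S = multivariateGaussian m S := by
  have hsq : CFC.sqrt S * CFC.sqrt S = S := CFC.sqrt_mul_sqrt_self S hS.posSemidef.nonneg
  have hsymm : (CFC.sqrt S)ᵀ = CFC.sqrt S := by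
    simpa [star_eq_conjTranspose] using (CFC.sqrt_nonneg S).isSelfAdjoint.star_eq
  have hdet : IsUnit (CFC.sqrt S).det := by
    refine isUnit_iff_ne_zero.mpr fun h => hS.det_pos.ne' ?_
    rw [← hsq, det_mul, h, zero_mul]
  rw [multivariateGaussian, stdGaussian_eq_gaussianMeasure, ← Function.comp_def (m + ·),
    ← Measure.map_map (measurable_const_add m) (toEuclideanCLM (𝕜 := ℝ) _).continuous.measurable,
    gaussianMeasure_map_toEuclideanCLM _ hdet, gaussianMeasure_map_const_add, add_zero,
    Matrix.mul_one, hsymm, hsq]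

theorem llr_gaussianMeasure (m₁ m₂ : EuclideanSpace ℝ (Fin d))
    {P₁ P₂ : Matrix (Fin d) (Fin d) ℝ} (hP₁ : P₁.PosDef) (hP₂ : P₂.PosDef) :
    llr (gaussianMeasure m₁ P₁) (gaussianMeasure m₂ P₂) =ᵐ[gaussianMeasure m₁ P₁] fun x =>
      (1 / 2) * (ofLp (x - m₂) ⬝ᵥ P₂⁻¹ *ᵥ ofLp (x - m₂) - ofLp (x - m₁) ⬝ᵥ P₁⁻¹ *ᵥ ofLp (x - m₁)
        - Real.log (P₁.det / P₂.det)) := by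
  have : SigmaFinite (volume.withDensity (gaussianPdf m₁ P₁)) :=
    SigmaFinite.withDensity_of_ne_top (ae_of_all _ fun _ => ENNReal.ofReal_ne_top)
  have hrn := Measure.rnDeriv_withDensity_withDensity volume (measurable_gaussianPdf m₁ P₁)
    (measurable_gaussianPdf m₂ P₂)
    (ae_of_all _ (gaussianPdf_ne_zero m₂ hP₂)) (ae_of_all _ fun _ => ENNReal.ofReal_ne_top)
  filter_upwards [withDensity_absolutelyContinuous _ _ hrn] with x hx
  have h₁ := gaussianPdfReal_pos m₁ hP₁ x
  have h₂ := gaussianPdfReal_pos m₂ hP₂ x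
  have := hP₁.det_pos
  have := hP₂.det_pos
  simp only [llr_def, gaussianMeasure]
  rw [hx, gaussianPdf_eq_ofReal, gaussianPdf_eq_ofReal, ← ENNReal.ofReal_inv_of_pos h₂,
    ← ENNReal.ofReal_mul (inv_nonneg.mpr h₂.le), ENNReal.toReal_ofReal (by positivity),
    Real.log_mul (inv_ne_zero h₂.ne') h₁.ne', Real.log_inv, log_gaussianPdfReal m₁ hP₁,
    log_gaussianPdfReal m₂ hP₂, Real.log_div hP₁.det_pos.ne' hP₂.det_pos.ne',
    Real.log_mul (by positivity) hP₁.det_pos.ne', Real.log_mul (by positivity) hP₂.det_pos.ne']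
  ring

end GaussianMeasure

theorem klDiv_gaussian_gaussian_general {d : ℕ}
    (m₁ m₂ : EuclideanSpace ℝ (Fin d)) (P₁ P₂ : Matrix (Fin d) (Fin d) ℝ)
    (hP₁ : P₁.PosDef) (hP₂ : P₂.PosDef) :
    klDiv (gaussianMeasure m₁ P₁) (gaussianMeasure m₂ P₂)
      = ENNReal.ofReal ((1 / 2) * ((P₂⁻¹ * P₁).trace - Real.log (P₁.det / P₂.det) - d
          + dotProduct (WithLp.ofLp (m₂ - m₁)) (P₂⁻¹.mulVec (WithLp.ofLp (m₂ - m₁))))) := by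
  have hμ := gaussianMeasure_eq_multivariateGaussian m₁ hP₁
  have : IsProbabilityMeasure (gaussianMeasure m₁ P₁) := hμ ▸ inferInstance
  have hq : ∀ A c, Integrable (fun x => ofLp (x - c) ⬝ᵥ A *ᵥ ofLp (x - c))
      (gaussianMeasure m₁ P₁) :=
    integrable_quadForm_sub (hμ ▸ IsGaussian.memLp_two_id)
  have hllr := llr_gaussianMeasure m₁ m₂ hP₁ hP₂
  have hint : Integrable (llr (gaussianMeasure m₁ P₁) (gaussianMeasure m₂ P₂))
      (gaussianMeasure m₁ P₁) :=
    ((((hq _ _).sub' (hq _ _)).sub' (integrable_const _)).const_mul _).congr hllr.symm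
  rw [klDiv, if_pos ⟨gaussianMeasure_absolutelyContinuous m₂ m₁ P₁ hP₂, hint⟩,
    integral_congr_ae hllr, integral_const_mul,
    integral_sub ((hq _ _).sub' (hq _ _)) (integrable_const _), integral_sub (hq _ _) (hq _ _), hμ,
    integral_quadForm_sub_multivariateGaussian _ _ hP₁.posSemidef,
    integral_quadForm_sub_multivariateGaussian _ _ hP₁.posSemidef, integral_const, probReal_univ,
    one_smul]
  rw [sub_self, ofLp_zero, zero_dotProduct, nonsing_inv_mul _ hP₁.det_pos.ne'.isUnit, trace_one,
    Fintype.card_fin, ← neg_sub m₂ m₁, ofLp_neg, mulVec_neg, dotProduct_neg, neg_dotProduct,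
    neg_neg]
  ring_nf

/-- Closed-form KL divergence between multivariate Gaussians (Appendix C):
`D(N(m₁,P₁) ‖ N(m₂,P₂)) = ½ (tr(P₂⁻¹P₁) − log(det P₁ / det P₂) − d + (m₂−m₁)ᵀP₂⁻¹(m₂−m₁))`. -/
theorem klDiv_gaussian_gaussian {d : ℕ} (hd : 0 < d)
    (m₁ m₂ : EuclideanSpace ℝ (Fin d)) (P₁ P₂ : Matrix (Fin d) (Fin d) ℝ)
    (hP₁ : P₁.PosDef) (hP₂ : P₂.PosDef) :
    klDiv (gaussianMeasure m₁ P₁) (gaussianMeasure m₂ P₂)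
      = ENNReal.ofReal ((1 / 2) * ((P₂⁻¹ * P₁).trace - Real.log (P₁.det / P₂.det) - d
          + dotProduct (WithLp.ofLp (m₂ - m₁)) (P₂⁻¹.mulVec (WithLp.ofLp (m₂ - m₁))))) :=
  klDiv_gaussian_gaussian_general m₁ m₂ P₁ P₂ hP₁ hP₂
end
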